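/- If a QBF φ = Π.ψ in PCNF is unsatisfiable under a QCDCL assignment A (i.e., φ[A] is unsatisfiable), then adding the clause C = ⋁_{l∈A} l̄ conjunctively to the matrix preserves satisfiability: Π.ψ is satisfiable if and only if Π.(ψ ∧ C) is satisfiable. -/

import Mathlib

/-- Variables are natural numbers. -/
abbrev Var := ℕ

/-- A literal is a variable together with a polarity. -/
abbrev Lit := Var × Bool

/-- Negation of a literal. -/
def Lit.negate (l : Lit) : Lit := (l.1, !l.2)

/-- A clause is a finite set of literals (interpreted disjunctively). -/
abbrev Clause := Finset Lit

/-- A cube is a finite set of literals (interpreted conjunctively). -/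
abbrev Cube := Finset Lit

/-- A CNF is a finite set of clauses. -/
abbrev Cnf := Finset Clause

/-- An assignment is a finite set of literals. -/
abbrev Assignment := Finset Lit

/-- An assignment contains no complementary pair of literals. -/
def Assignment.consistent (A : Assignment) : Prop := ∀ l ∈ A, Lit.negate l ∉ A

/-- A total assignment satisfies a literal. -/
def litSat (σ : Var → Bool) (l : Lit) : Prop := σ l.1 = l.2

/-- A total assignment satisfies a clause. -/
def clauseSat (σ : Var → Bool) (C : Clause) : Prop := ∃ l ∈ C, litSat σ l

/-- A total assignment satisfies a CNF (is a propositional model). -/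
def cnfSat (σ : Var → Bool) (ψ : Cnf) : Prop := ∀ C ∈ ψ, clauseSat σ C

/-- A total assignment satisfies a cube. -/
def cubeSat (σ : Var → Bool) (D : Cube) : Prop := ∀ l ∈ D, litSat σ l

/-- Restriction of a clause by an assignment: delete falsified literals. -/
def Clause.restrict (C : Clause) (A : Assignment) : Clause :=
  C.filter (fun l => Lit.negate l ∉ A)

/-- Restriction ψ[A] of a CNF by an assignment: remove satisfied clauses and
delete falsified literals from the remaining clauses. -/
def Cnf.restrict (ψ : Cnf) (A : Assignment) : Cnf :=
  (ψ.filter (fun C => ∀ l ∈ A, l ∉ C)).image (fun C => Clause.restrict C A)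

/-- Quantifiers. -/
inductive Quant | ex | all
deriving DecidableEq

/-- A quantifier prefix: a list of quantified variables (outermost first). -/
abbrev QPrefix := List (Quant × Var)

/-- Restriction of a prefix by an assignment: remove assigned variables. -/
def QPrefix.restrict (pre : QPrefix) (A : Assignment) : QPrefix :=
  pre.filter (fun q => q.2 ∉ A.image Prod.fst)

/-- Satisfiability of the PCNF `pre.ψ`, defined recursively over the prefix:
an existential variable needs one satisfiable branch, a universal variable
both; a quantifier-free CNF is satisfiable iff it is propositionally true. -/
def qbfSat : QPrefix → Cnf → Prop
  | [], ψ => ∃ σ : Var → Bool, cnfSat σ ψ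
  | (Quant.ex, x) :: pre, ψ =>
      qbfSat pre (Cnf.restrict ψ {(x, true)}) ∨ qbfSat pre (Cnf.restrict ψ {(x, false)})
  | (Quant.all, x) :: pre, ψ =>
      qbfSat pre (Cnf.restrict ψ {(x, true)}) ∧ qbfSat pre (Cnf.restrict ψ {(x, false)})

/-- Literal `l` is unit in the PCNF: the clause `(l)` occurs in the matrix
and the variable of `l` is existential. -/
def isUnit (pre : QPrefix) (ψ : Cnf) (l : Lit) : Prop :=
  ({l} : Clause) ∈ ψ ∧ (Quant.ex, l.1) ∈ pre

/-- Literal `l` occurs in the CNF. -/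
def occurs (ψ : Cnf) (l : Lit) : Prop := ∃ C ∈ ψ, l ∈ C

/-- Literal `l` is pure: it occurs but its negation does not. -/
def isPure (ψ : Cnf) (l : Lit) : Prop := occurs ψ l ∧ ¬ occurs ψ (Lit.negate l)

/-- Literals obtained by iterated unit/pure literal detection (QBCP), starting
from the decision assignment `A0`.  A pure existential literal is assigned
positively, a pure universal literal negatively; a unit existential literal is
assigned positively. -/
inductive PropChain (pre : QPrefix) (ψ : Cnf) (A0 : Assignment) : List Lit → Prop
  | nil : PropChain pre ψ A0 []
  | unit {ls : List Lit} {l : Lit} (h : PropChain pre ψ A0 ls)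
      (hu : isUnit pre (Cnf.restrict ψ (A0 ∪ ls.toFinset)) l) :
      PropChain pre ψ A0 (l :: ls)
  | pureEx {ls : List Lit} {l : Lit} (h : PropChain pre ψ A0 ls)
      (hp : isPure (Cnf.restrict ψ (A0 ∪ ls.toFinset)) l)
      (he : (Quant.ex, l.1) ∈ pre) :
      PropChain pre ψ A0 (l :: ls)
  | pureAll {ls : List Lit} {l : Lit} (h : PropChain pre ψ A0 ls)
      (hp : isPure (Cnf.restrict ψ (A0 ∪ ls.toFinset)) l)
      (ha : (Quant.all, l.1) ∈ pre) :
      PropChain pre ψ A0 (Lit.negate l :: ls)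

/-- A QCDCL assignment: a consistent assignment `A = A' ∪ A''` where the
decision literals `A'` assign exactly the variables of an initial segment of
the prefix and `A''` is obtained by unit/pure literal detection (QBCP). -/
def QCDCLAssignment (pre : QPrefix) (ψ : Cnf) (A : Assignment) : Prop :=
  Assignment.consistent A ∧
  ∃ (A0 : Assignment) (ls : List Lit) (k : ℕ),
    A = A0 ∪ ls.toFinset ∧
    A0.image Prod.fst = ((pre.take k).map Prod.snd).toFinset ∧
    PropChain pre ψ A0 ls

/-! Unit propagation and pure-literal elimination preserve satisfiability, so with `A₀` the
decision literals of `A`, the QBF `φ[A₀]` is false as well. The decisions `A₀` assign an initial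
segment of the prefix. In the semantic tree of `φ`, a branch that leaves `A₀` at one of these
variables falsifies a literal of `A₀`, hence satisfies `C`, so adding `C` changes nothing there;
a branch that follows `A₀` through the whole segment ends in the false `φ[A₀]` and is therefore
never needed to witness satisfiability. -/

namespace Lit

@[simp] lemma negate_negate (l : Lit) : l.negate.negate = l := by
  simp [negate]

@[simp] lemma fst_negate (l : Lit) : l.negate.1 = l.1 := rfl

lemma negate_ne_self (l : Lit) : l.negate ≠ l := by
  simp [negate, Prod.ext_iff]

end Lit

lemma Assignment.consistent.mono {A B : Assignment} (hA : A.consistent) (h : B ⊆ A) :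
    B.consistent :=
  fun l hl hneg => hA l (h hl) (h hneg)

namespace Clause

@[simp] lemma mem_restrict {C : Clause} {α : Assignment} {l : Lit} :
    l ∈ C.restrict α ↔ l ∈ C ∧ l.negate ∉ α := by
  simp [restrict]

lemma restrict_subset (C : Clause) (α : Assignment) : C.restrict α ⊆ C :=
  Finset.filter_subset _ _

end Clause

namespace Cnf

lemma mem_restrict {ψ : Cnf} {α : Assignment} {D : Clause} :
    D ∈ ψ.restrict α ↔ ∃ C ∈ ψ, (∀ l ∈ α, l ∉ C) ∧ C.restrict α = D := by
  simp only [restrict, Finset.mem_image, Finset.mem_filter, and_assoc]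

@[simp] lemma restrict_empty (ψ : Cnf) : ψ.restrict ∅ = ψ := by
  ext D
  simp [mem_restrict, Clause.restrict]

lemma restrict_mono {ψ₁ ψ₂ : Cnf} (h : ψ₁ ⊆ ψ₂) (α : Assignment) :
    ψ₁.restrict α ⊆ ψ₂.restrict α :=
  Finset.image_subset_image (Finset.filter_subset_filter _ h)

lemma restrict_restrict (ψ : Cnf) {α β : Assignment} (h : ∀ l ∈ β, l.negate ∉ α) :
    (ψ.restrict α).restrict β = ψ.restrict (α ∪ β) := by
  ext D
  simp only [mem_restrict]
  constructor
  · rintro ⟨_, ⟨C, hC, hα, rfl⟩, hβ, rfl⟩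
    refine ⟨C, hC, fun l hl => ?_, ?_⟩
    · rcases Finset.mem_union.1 hl with hl | hl
      · exact hα l hl
      · exact fun hlC => hβ l hl (Clause.mem_restrict.2 ⟨hlC, h l hl⟩)
    · ext l
      simp [and_assoc]
  · rintro ⟨C, hC, hαβ, rfl⟩
    refine ⟨C.restrict α, ⟨C, hC, fun l hl => hαβ l (Finset.mem_union_left _ hl), rfl⟩,
      fun l hl hlC => hαβ l (Finset.mem_union_right _ hl) (Clause.restrict_subset C α hlC), ?_⟩
    ext l
    simp [and_assoc]

lemma restrict_singleton_comm (ψ : Cnf) {l m : Lit} (h : l.1 ≠ m.1) :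
    (ψ.restrict {l}).restrict {m} = (ψ.restrict {m}).restrict {l} := by
  have hlm : ∀ {a b : Lit}, a.1 ≠ b.1 →
      ∀ x ∈ ({b} : Assignment), x.negate ∉ ({a} : Assignment) := by
    intro a b hab x hx hxa
    rw [Finset.mem_singleton] at hx hxa
    exact hab (by rw [← hxa, hx, Lit.fst_negate])
  rw [restrict_restrict ψ (hlm h), restrict_restrict ψ (hlm h.symm), Finset.union_comm]

lemma restrict_insert_of_mem {ψ : Cnf} {C : Clause} {l : Lit} (hl : l ∈ C) :
    (insert C ψ).restrict {l} = ψ.restrict {l} := by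
  simp [restrict, Finset.filter_insert, hl]

lemma restrict_insert_of_notMem {ψ : Cnf} {C : Clause} {l : Lit} (hl : l ∉ C) :
    (insert C ψ).restrict {l} = insert (C.restrict {l}) (ψ.restrict {l}) := by
  simp [restrict, Finset.filter_insert, hl]

lemma empty_mem_restrict {ψ : Cnf} (h : ∅ ∈ ψ) (α : Assignment) : ∅ ∈ ψ.restrict α :=
  mem_restrict.2 ⟨∅, h, by simp, by simp [Clause.restrict]⟩

lemma singleton_mem_restrict {ψ : Cnf} {l m : Lit} (h : {l} ∈ ψ) (hm : m.1 ≠ l.1) :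
    {l} ∈ ψ.restrict {m} := by
  refine mem_restrict.2 ⟨{l}, h, fun x hx hxl => ?_, ?_⟩
  · rw [Finset.mem_singleton] at hx hxl
    exact hm (by rw [← hx, hxl])
  · ext x
    simp only [Clause.mem_restrict, Finset.mem_singleton, and_iff_left_iff_imp]
    rintro rfl hx
    exact hm (by rw [← hx, Lit.fst_negate])

lemma empty_mem_restrict_negate {ψ : Cnf} {l : Lit} (h : {l} ∈ ψ) :
    ∅ ∈ ψ.restrict {l.negate} := by
  refine mem_restrict.2 ⟨{l}, h, by simpa using l.negate_ne_self, ?_⟩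
  ext x
  simp only [Clause.mem_restrict, Finset.mem_singleton, Finset.notMem_empty, iff_false,
    not_and, not_not]
  rintro rfl
  rfl

/- Without occurrences of `¬l`, the clauses of `ψ[l]` are the clauses of `ψ` not containing `l`,
which `ψ[¬l]` keeps unchanged. -/
lemma restrict_subset_restrict_negate {ψ : Cnf} {l : Lit} (h : ¬ occurs ψ l.negate) :
    ψ.restrict {l} ⊆ ψ.restrict {l.negate} := by
  intro D hD
  obtain ⟨C, hC, hlC, rfl⟩ := mem_restrict.1 hD
  have hnlC : l.negate ∉ C := fun hn => h ⟨C, hC, hn⟩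
  have hres : ∀ m : Lit, C.restrict {m} = C ↔ m.negate ∉ C := by
    intro m
    rw [Clause.restrict, Finset.filter_eq_self]
    simp only [Finset.mem_singleton]
    exact ⟨fun hm hmC => hm _ hmC (by simp), fun hm x hx hxm => hm (by simpa [← hxm] using hx)⟩
  refine mem_restrict.2 ⟨C, hC, by simpa using hnlC, ?_⟩
  rw [(hres _).2 (by simpa using hlC l (Finset.mem_singleton_self l)), (hres _).2 hnlC]

end Cnf

lemma fst_notMem_image_of_occurs_restrict {ψ : Cnf} {α : Assignment} {l : Lit}
    (h : occurs (ψ.restrict α) l) : l.1 ∉ α.image Prod.fst := by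
  obtain ⟨_, hD, hlD⟩ := h
  obtain ⟨C, -, hα, rfl⟩ := Cnf.mem_restrict.1 hD
  obtain ⟨hlC, hnl⟩ := Clause.mem_restrict.1 hlD
  intro hx
  obtain ⟨m, hm, hml⟩ := Finset.mem_image.1 hx
  obtain ⟨x, b⟩ := l
  obtain ⟨y, c⟩ := m
  simp only at hml
  subst hml
  cases b <;> cases c <;> first | exact hα _ hm hlC | exact hnl hm

lemma not_occurs_restrict {ψ : Cnf} {l : Lit} (h : ¬ occurs ψ l) (α : Assignment) :
    ¬ occurs (ψ.restrict α) l := by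
  rintro ⟨_, hD, hlD⟩
  obtain ⟨C, hC, -, rfl⟩ := Cnf.mem_restrict.1 hD
  exact h ⟨C, hC, Clause.restrict_subset C α hlD⟩

namespace QPrefix

lemma mem_restrict {pre : QPrefix} {α : Assignment} {p : Quant × Var} :
    p ∈ pre.restrict α ↔ p ∈ pre ∧ p.2 ∉ α.image Prod.fst := by
  simp [restrict]

lemma restrict_restrict (pre : QPrefix) (α β : Assignment) :
    (pre.restrict α).restrict β = pre.restrict (α ∪ β) := by
  simp only [restrict, List.filter_filter, Finset.image_union, Finset.mem_union]
  congr 1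
  funext p
  simp [not_or, Bool.and_comm]

lemma nodup_restrict {pre : QPrefix} (hnd : (pre.map Prod.snd).Nodup) (α : Assignment) :
    ((pre.restrict α).map Prod.snd).Nodup :=
  hnd.sublist (List.filter_sublist.map _)

lemma restrict_cons_of_ne {q : Quant} {y : Var} {pre : QPrefix} {l : Lit} (h : y ≠ l.1) :
    QPrefix.restrict ((q, y) :: pre) {l} = (q, y) :: pre.restrict {l} := by
  simp [restrict, h]

lemma restrict_cons_self {q : Quant} {pre : QPrefix} {l : Lit}
    (h : l.1 ∉ pre.map Prod.snd) : QPrefix.restrict ((q, l.1) :: pre) {l} = pre := by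
  simp only [restrict, List.filter_cons, Finset.image_singleton, Finset.mem_singleton,
    not_true_eq_false, decide_false, Bool.false_eq_true, if_false]
  refine List.filter_eq_self.2 fun p hp => ?_
  simpa using fun hpl => h (List.mem_map.2 ⟨p, hp, hpl⟩)

lemma restrict_eq_drop {pre : QPrefix} {α : Assignment} {k : ℕ}
    (hnd : (pre.map Prod.snd).Nodup)
    (h : α.image Prod.fst = ((pre.take k).map Prod.snd).toFinset) :
    pre.restrict α = pre.drop k := by
  rw [← List.take_append_drop k pre, List.map_append, List.nodup_append] at hnd
  conv_lhs => rw [← List.take_append_drop k pre]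
  rw [restrict, List.filter_append, h, List.filter_eq_nil_iff.2, List.filter_eq_self.2,
    List.nil_append]
  · intro p hp
    simpa using fun hpk => hnd.2.2 _ hpk _ (List.mem_map_of_mem hp) rfl
  · intro p hp
    simpa using List.mem_map_of_mem hp

end QPrefix

lemma qbfSat_cons_of_forall {q : Quant} {x : Var} {pre₁ pre₂ : QPrefix} {ψ₁ ψ₂ : Cnf}
    (h : ∀ b, qbfSat pre₁ (ψ₁.restrict {(x, b)}) → qbfSat pre₂ (ψ₂.restrict {(x, b)})) :
    qbfSat ((q, x) :: pre₁) ψ₁ → qbfSat ((q, x) :: pre₂) ψ₂ := by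
  cases q
  · exact Or.imp (h true) (h false)
  · exact And.imp (h true) (h false)

lemma qbfSat_of_subset {pre : QPrefix} {ψ₁ ψ₂ : Cnf} (h : ψ₁ ⊆ ψ₂) :
    qbfSat pre ψ₂ → qbfSat pre ψ₁ := by
  induction pre generalizing ψ₁ ψ₂ with
  | nil => exact fun ⟨σ, hσ⟩ => ⟨σ, fun C hC => hσ C (h hC)⟩
  | cons p pre ih => exact qbfSat_cons_of_forall fun _ => ih (Cnf.restrict_mono h _)

lemma not_qbfSat_of_empty_mem {pre : QPrefix} {ψ : Cnf} (h : ∅ ∈ ψ) : ¬ qbfSat pre ψ := by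
  induction pre generalizing ψ with
  | nil =>
    rintro ⟨σ, hσ⟩
    obtain ⟨l, hl, -⟩ := hσ ∅ h
    simp at hl
  | cons p pre ih =>
    obtain ⟨q, x⟩ := p
    cases q <;> simp [qbfSat, ih (Cnf.empty_mem_restrict h _)]

/- `S` survives assigning variables other than `l.1`, so the restriction by `l` can be pushed past
the quantifiers above that of `l.1`, where `hhead` applies. -/
theorem qbfSat_restrict_of_invariant {q : Quant} {l : Lit} (S : Cnf → Prop)
    (hS : ∀ ψ m, m.1 ≠ l.1 → S ψ → S (ψ.restrict {m}))
    (hhead : ∀ pre ψ, S ψ → qbfSat ((q, l.1) :: pre) ψ → qbfSat pre (ψ.restrict {l}))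
    {pre : QPrefix} {ψ : Cnf} (hnd : (pre.map Prod.snd).Nodup) (hl : (q, l.1) ∈ pre)
    (hψ : S ψ) (h : qbfSat pre ψ) : qbfSat (pre.restrict {l}) (ψ.restrict {l}) := by
  induction pre generalizing ψ with
  | nil => simp at hl
  | cons p pre ih =>
    obtain ⟨q', y⟩ := p
    rw [List.map_cons, List.nodup_cons] at hnd
    rcases List.mem_cons.1 hl with hp | hl'
    · obtain ⟨rfl, rfl⟩ := Prod.ext_iff.1 hp
      rw [QPrefix.restrict_cons_self hnd.1]
      exact hhead pre ψ hψ h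
    · have hy : y ≠ l.1 := fun hy => hnd.1 (List.mem_map.2 ⟨_, hl', hy.symm⟩)
      rw [QPrefix.restrict_cons_of_ne hy]
      refine qbfSat_cons_of_forall (fun b hb => ?_) h
      rw [Cnf.restrict_singleton_comm ψ (Ne.symm hy)]
      exact ih hnd.2 hl' (hS ψ (y, b) hy hψ) hb

lemma qbfSat_restrict_of_qbfSat_cons_ex {pre : QPrefix} {ψ : Cnf} {l : Lit}
    (h : qbfSat pre (ψ.restrict {l.negate}) → qbfSat pre (ψ.restrict {l})) :
    qbfSat ((Quant.ex, l.1) :: pre) ψ → qbfSat pre (ψ.restrict {l}) := by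
  obtain ⟨x, b⟩ := l
  cases b <;> rintro (h' | h') <;> first | exact h' | exact h h'

lemma qbfSat_restrict_of_isUnit {pre : QPrefix} {ψ : Cnf} {l : Lit}
    (hnd : (pre.map Prod.snd).Nodup) (hu : isUnit pre ψ l) (h : qbfSat pre ψ) :
    qbfSat (pre.restrict {l}) (ψ.restrict {l}) :=
  qbfSat_restrict_of_invariant (fun ψ => {l} ∈ ψ)
    (fun _ _ hm hψ => Cnf.singleton_mem_restrict hψ hm)
    (fun _ _ hψ => qbfSat_restrict_of_qbfSat_cons_ex fun h' =>
      absurd h' (not_qbfSat_of_empty_mem (Cnf.empty_mem_restrict_negate hψ)))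
    hnd hu.2 hu.1 h

lemma qbfSat_restrict_of_not_occurs_negate {pre : QPrefix} {ψ : Cnf} {l : Lit}
    (hnd : (pre.map Prod.snd).Nodup) (hl : (Quant.ex, l.1) ∈ pre) (hp : ¬ occurs ψ l.negate)
    (h : qbfSat pre ψ) : qbfSat (pre.restrict {l}) (ψ.restrict {l}) :=
  qbfSat_restrict_of_invariant (fun ψ => ¬ occurs ψ l.negate)
    (fun _ _ _ hψ => not_occurs_restrict hψ _)
    (fun _ _ hψ => qbfSat_restrict_of_qbfSat_cons_ex
      (qbfSat_of_subset (Cnf.restrict_subset_restrict_negate hψ)))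
    hnd hl hp h

lemma qbfSat_restrict_of_universal {pre : QPrefix} {ψ : Cnf} {l : Lit}
    (hnd : (pre.map Prod.snd).Nodup) (hl : (Quant.all, l.1) ∈ pre) (h : qbfSat pre ψ) :
    qbfSat (pre.restrict {l}) (ψ.restrict {l}) :=
  qbfSat_restrict_of_invariant (fun _ => True) (fun _ _ _ _ => trivial)
    (fun _ _ _ h' => by obtain ⟨x, b⟩ := l; cases b; exacts [h'.2, h'.1])
    hnd hl trivial h

lemma Assignment.consistent.eq_insert_filter {D : Assignment} (hD : D.consistent) {l : Lit}
    (hl : l ∈ D) : D = insert l (D.filter (·.1 ≠ l.1)) := by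
  ext m
  simp only [Finset.mem_insert, Finset.mem_filter]
  refine ⟨fun hm => or_iff_not_imp_right.2 fun hml => ?_, ?_⟩
  · have hm1 : m.1 = l.1 := by simpa [hm] using hml
    obtain ⟨x, b⟩ := m
    obtain ⟨y, c⟩ := l
    simp only at hm1
    subst hm1
    by_contra hne
    have hbc : b = !c := by cases b <;> cases c <;> simp_all
    exact hD _ hl (by simpa [Lit.negate, hbc] using hm)
  · rintro (rfl | ⟨hm, -⟩) <;> assumption

lemma qbfSat_restrict_insert {pre : QPrefix} {ψ : Cnf} {B : Assignment} {m : Lit}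
    (hc : (insert m B).consistent)
    (h : qbfSat ((pre.restrict B).restrict {m}) ((ψ.restrict B).restrict {m})) :
    qbfSat (pre.restrict (insert m B)) (ψ.restrict (insert m B)) := by
  have hm : ∀ l ∈ ({m} : Assignment), l.negate ∉ B := by
    simpa using hc m (Finset.mem_insert_self m B) ∘ Finset.mem_insert_of_mem
  rwa [QPrefix.restrict_restrict, Cnf.restrict_restrict ψ hm, Finset.union_comm,
    ← Finset.insert_eq] at h

theorem PropChain.qbfSat_restrict {pre : QPrefix} {ψ : Cnf} {A0 : Assignment} {ls : List Lit}
    (hnd : (pre.map Prod.snd).Nodup) (hchain : PropChain pre ψ A0 ls)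
    (hc : (A0 ∪ ls.toFinset).consistent) (h : qbfSat (pre.restrict A0) (ψ.restrict A0)) :
    qbfSat (pre.restrict (A0 ∪ ls.toFinset)) (ψ.restrict (A0 ∪ ls.toFinset)) := by
  induction hchain with
  | nil => simpa using h
  | unit _ hu ih =>
    rw [List.toFinset_cons, Finset.union_insert] at hc ⊢
    refine qbfSat_restrict_insert hc (qbfSat_restrict_of_isUnit (QPrefix.nodup_restrict hnd _)
      ⟨hu.1, QPrefix.mem_restrict.2 ⟨hu.2, ?_⟩⟩ (ih (hc.mono (Finset.subset_insert _ _))))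
    exact fst_notMem_image_of_occurs_restrict ⟨_, hu.1, Finset.mem_singleton_self _⟩
  | pureEx _ hp he ih =>
    rw [List.toFinset_cons, Finset.union_insert] at hc ⊢
    exact qbfSat_restrict_insert hc (qbfSat_restrict_of_not_occurs_negate
      (QPrefix.nodup_restrict hnd _)
      (QPrefix.mem_restrict.2 ⟨he, fst_notMem_image_of_occurs_restrict hp.1⟩) hp.2
      (ih (hc.mono (Finset.subset_insert _ _))))
  | pureAll _ hp ha ih =>
    rw [List.toFinset_cons, Finset.union_insert] at hc ⊢
    exact qbfSat_restrict_insert hc (qbfSat_restrict_of_universal (QPrefix.nodup_restrict hnd _)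
      (QPrefix.mem_restrict.2 ⟨ha, (fst_notMem_image_of_occurs_restrict hp.1 :)⟩)
      (ih (hc.mono (Finset.subset_insert _ _))))

lemma image_fst_filter_fst_ne {D : Assignment} {x : Var} {T : Finset Var} (hx : x ∉ T)
    (h : D.image Prod.fst = insert x T) : (D.filter (·.1 ≠ x)).image Prod.fst = T := by
  rw [← Finset.filter_image (p := (· ≠ x)), h, Finset.filter_insert, if_neg (by simp)]
  exact Finset.filter_true_of_mem fun y hy hyx => hx (hyx ▸ hy)

theorem qbfSat_insert_of_not_qbfSat_drop {pre : QPrefix} {ψ : Cnf} {D : Assignment}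
    {k : ℕ} {C : Clause} (hnd : (pre.map Prod.snd).Nodup) (hD : D.consistent)
    (himg : D.image Prod.fst = ((pre.take k).map Prod.snd).toFinset)
    (hC : ∀ l ∈ D, l.negate ∈ C) (hunsat : ¬ qbfSat (pre.drop k) (ψ.restrict D))
    (h : qbfSat pre ψ) : qbfSat pre (insert C ψ) := by
  induction pre generalizing ψ D k C with
  | nil => simp_all
  | cons p rest ih =>
    obtain ⟨q, x⟩ := p
    rw [List.map_cons, List.nodup_cons] at hnd
    cases k with
    | zero => simp_all
    | succ k =>
      rw [List.take_succ_cons, List.map_cons, List.toFinset_cons] at himg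
      obtain ⟨a, hxa⟩ : ∃ a, (x, a) ∈ D := by
        obtain ⟨⟨y, a⟩, hya, rfl⟩ := Finset.mem_image.1 (himg ▸ Finset.mem_insert_self _ _)
        exact ⟨a, hya⟩
      refine qbfSat_cons_of_forall (fun b hb => ?_) h
      by_cases hba : b = a
      · subst hba
        by_cases hxC : (x, b) ∈ C
        · rwa [Cnf.restrict_insert_of_mem hxC]
        rw [Cnf.restrict_insert_of_notMem hxC]
        have hx : x ∉ ((rest.take k).map Prod.snd).toFinset := by
          simpa using fun hx => hnd.1 (List.map_subset _ (List.take_subset k rest) hx)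
        refine ih hnd.2 (hD.mono (Finset.filter_subset _ _)) (image_fst_filter_fst_ne hx himg)
          (fun l hl => ?_) ?_ hb
        · obtain ⟨hlD, hlx⟩ := Finset.mem_filter.1 hl
          exact Clause.mem_restrict.2 ⟨hC l hlD, by simp [Prod.ext_iff, hlx]⟩
        · rwa [Cnf.restrict_restrict, ← Finset.insert_eq, ← hD.eq_insert_filter hxa]
          intro l hl
          simp [Prod.ext_iff, (Finset.mem_filter.1 hl).2]
      · have hxC : (x, b) ∈ C := by
          simpa [Lit.negate, Bool.eq_not_iff.2 hba] using hC _ hxa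
        rwa [Cnf.restrict_insert_of_mem hxC]

/-- Generalized conflict generation: if `A` is a QCDCL assignment and the QBF
`φ[A]` is unsatisfiable, then adding the clause `C = ⋁_{l ∈ A} ¬l`
conjunctively to the matrix preserves satisfiability. -/
theorem generalized_conflict_generation
    (pre : QPrefix) (ψ : Cnf) (A : Assignment)
    (hnodup : (pre.map Prod.snd).Nodup)
    (hA : QCDCLAssignment pre ψ A)
    (hunsat : ¬ qbfSat (QPrefix.restrict pre A) (Cnf.restrict ψ A)) :
    qbfSat pre ψ ↔ qbfSat pre (insert (A.image Lit.negate) ψ) := by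
  obtain ⟨hcons, A0, ls, k, rfl, himg, hchain⟩ := hA
  have hunsat0 : ¬ qbfSat (pre.drop k) (ψ.restrict A0) := by
    rw [← QPrefix.restrict_eq_drop hnodup himg]
    exact fun h => hunsat (hchain.qbfSat_restrict hnodup hcons h)
  refine ⟨qbfSat_insert_of_not_qbfSat_drop hnodup
    (hcons.mono Finset.subset_union_left) himg (fun l hl => ?_) hunsat0,
    qbfSat_of_subset (Finset.subset_insert _ _)⟩
  exact Finset.mem_image_of_mem _ (Finset.mem_union_left _ hl)
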